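/- Suppose there exists a super-simple Room frame of type 2^t. Then there exists an optimal (2t,5,[2,1,1])_4-code of size 2t(t−1), which equals the upper bound 2t·⌊(2t−1)/2⌋. -/

import Mathlib

open Finset

/-- `u` has composition `w̄`: for each nonzero symbol `j`, exactly `w j` coordinates equal `j`. -/
def HasComposition {q : ℕ} {X : Type*} [Fintype X] [DecidableEq X]
    (w : ZMod q → ℕ) (u : X → ZMod q) : Prop :=
  ∀ j : ZMod q, j ≠ 0 → (Finset.univ.filter fun x => u x = j).card = w j

/-- A constant-composition code with composition `w̄` and minimum distance `d`. -/
def IsCCCode (q d : ℕ) (w : ZMod q → ℕ) {X : Type*} [Fintype X] [DecidableEq X]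
    (C : Finset (X → ZMod q)) : Prop :=
  (∀ u ∈ C, HasComposition w u) ∧
  ∀ u ∈ C, ∀ v ∈ C, u ≠ v → d ≤ hammingDist u v

/-- `A_q(n,d,w̄)`: the maximum size of an `(n,d,w̄)_q` constant-composition code. -/
noncomputable def maxCCC (q n d : ℕ) (w : ZMod q → ℕ) : ℕ :=
  sSup {s | ∃ C : Finset (Fin n → ZMod q), IsCCCode q d w C ∧ C.card = s}

/-- The composition `[2,1,1]` for quaternary codes: two 1's, one 2, one 3. -/
def w211 : ZMod 4 → ℕ :=
  fun j => if j = 1 then 2 else if j = 2 then 1 else if j = 3 then 1 else 0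

/-- A Room frame of type `2^t` on the symbol set `Fin (2t)`, whose holes are the
pairs `Sᵢ = {2i, 2i+1}` (the hole of `x` is `x/2`).  Cells are empty or contain an
unordered pair of symbols from distinct holes; the subarrays `Sᵢ × Sᵢ` are empty;
each symbol `x` outside the hole of `s` occurs exactly once in row `s` and once in
column `s`; every pair of symbols from distinct holes occurs in exactly one cell. -/
structure RoomFrame2 (t : ℕ) where
  cell : Fin (2 * t) → Fin (2 * t) → Option (Sym2 (Fin (2 * t)))
  hole_empty : ∀ r c : Fin (2 * t), (r : ℕ) / 2 = (c : ℕ) / 2 → cell r c = none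
  cross_pairs : ∀ r c p, cell r c = some p →
    ∀ x y : Fin (2 * t), p = s(x, y) → (x : ℕ) / 2 ≠ (y : ℕ) / 2
  row_once : ∀ s x : Fin (2 * t), (s : ℕ) / 2 ≠ (x : ℕ) / 2 →
    ∃! c : Fin (2 * t), ∃ p, cell s c = some p ∧ x ∈ p
  col_once : ∀ s x : Fin (2 * t), (s : ℕ) / 2 ≠ (x : ℕ) / 2 →
    ∃! r : Fin (2 * t), ∃ p, cell r s = some p ∧ x ∈ p
  pair_once : ∀ x y : Fin (2 * t), (x : ℕ) / 2 ≠ (y : ℕ) / 2 →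
    ∃! rc : Fin (2 * t) × Fin (2 * t), cell rc.1 rc.2 = some s(x, y)

/-- Super-simplicity for a Room frame: the underlying 4-sets of any two distinct
filled cells share at most two elements. -/
def RoomFrame2.SuperSimple {t : ℕ} (F : RoomFrame2 t) : Prop :=
  ∀ r₁ c₁ p₁ r₂ c₂ p₂, F.cell r₁ c₁ = some p₁ → F.cell r₂ c₂ = some p₂ →
    (r₁, c₁) ≠ (r₂, c₂) →
    (({x | x ∈ p₁} ∪ {r₁, c₁}) ∩ ({x | x ∈ p₂} ∪ {r₂, c₂}) : Set (Fin (2 * t))).ncard ≤ 2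


/-!
A filled cell `(r, c)` of the frame containing `{a, b}` gives the word with `2` at `r`, `3` at `c`
and `1` at `a` and `b`. Counting incidences shows that row `r` never contains a symbol of the hole
of `r`, and likewise for columns, so these `2t(t-1)` words have composition `[2,1,1]`. For two such
words, `d(u, v) + #(common support) + #(support positions where they agree) = 8`. Super-simplicity
bounds the common support by `2`, and the words agree in at most one position, because any two of
the roles row / column / pair member already determine the cell. Hence `d(u, v) ≥ 5`.

Conversely, two words of an `(n,5,[2,1,1])₄`-code with their `2` at the same position agree there,
so their `1`-positions are disjoint: at most `⌊(n-1)/2⌋` codewords have their `2` at a given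
position.
-/

section Hamming

variable {ι M : Type*} [Fintype ι] [Zero M] [DecidableEq M]

theorem hammingDist_add_card_agree_add_card_inter (u v : ι → M) :
    hammingDist u v + #{x | u x ≠ 0 ∧ u x = v x} + #{x | u x ≠ 0 ∧ v x ≠ 0} =
      hammingNorm u + hammingNorm v := by
  simp only [hammingDist, hammingNorm, card_filter, ← sum_add_distrib]
  refine sum_congr rfl fun x _ => ?_
  by_cases hu : u x = 0 <;> by_cases hv : v x = 0 <;> by_cases huv : u x = v x <;> simp_all

end Hamming

section Composition

variable {X : Type*} [Fintype X] [DecidableEq X]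

theorem HasComposition.hammingNorm_eq {q : ℕ} [NeZero q] {w : ZMod q → ℕ} {u : X → ZMod q}
    (hu : HasComposition w u) : hammingNorm u = ∑ j ∈ univ.erase 0, w j := by
  rw [hammingNorm, card_eq_sum_card_fiberwise (f := u) (t := univ.erase 0) (by intro x; simp)]
  refine sum_congr rfl fun j hj => ?_
  rw [← hu j (ne_of_mem_erase hj), filter_filter]
  congr 1
  ext x
  simp only [mem_filter, mem_univ, true_and, and_iff_right_iff_imp]
  rintro rfl
  exact ne_of_mem_erase hj

theorem HasComposition.hammingNorm_w211 {u : X → ZMod 4} (hu : HasComposition w211 u) :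
    hammingNorm u = 4 := by
  rw [hu.hammingNorm_eq]; rfl

theorem hammingDist_le_four_of_agree {u v : X → ZMod 4} (hu : HasComposition w211 u)
    (hv : HasComposition w211 v) {a b : X} (hab : a ≠ b) (ha : u a = v a) (hb : u b = v b)
    (ha0 : u a ≠ 0) (hb0 : u b ≠ 0) : hammingDist u v ≤ 4 := by
  have key := hammingDist_add_card_agree_add_card_inter u v
  rw [hu.hammingNorm_w211, hv.hammingNorm_w211] at key
  have hagree : 2 ≤ #{x | u x ≠ 0 ∧ u x = v x} := by
    rw [← card_pair hab]
    refine card_le_card fun x hx => ?_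
    rcases mem_insert.1 hx with rfl | hx
    · exact mem_filter.2 ⟨mem_univ x, ha0, ha⟩
    · rw [mem_singleton.1 hx]
      exact mem_filter.2 ⟨mem_univ b, hb0, hb⟩
  have hsub : #{x | u x ≠ 0 ∧ u x = v x} ≤ #{x | u x ≠ 0 ∧ v x ≠ 0} :=
    card_le_card fun x hx => by
      simp only [mem_filter, mem_univ, true_and] at hx ⊢
      exact ⟨hx.1, hx.2 ▸ hx.1⟩
  omega

theorem IsCCCode.card_filter_eq_two_mul_two_le {C : Finset (X → ZMod 4)}
    (hC : IsCCCode 4 5 w211 C) (a : X) : #{u ∈ C | u a = 2} * 2 ≤ Fintype.card X - 1 := by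
  rw [← card_univ, ← card_erase_of_mem (mem_univ a), ← mul_one #(univ.erase a)]
  refine card_mul_le_card_mul (fun (u : X → ZMod 4) z => u z = 1) (fun u hu => ?_) (fun z _ => ?_)
  · obtain ⟨huC, hua⟩ := mem_filter.1 hu
    have hones : #{z | u z = 1} = 2 := hC.1 u huC 1 (by decide)
    refine hones.symm.trans_le (card_le_card fun z hz => ?_)
    have hz : u z = 1 := (mem_filter.1 hz).2
    refine mem_filter.2 ⟨mem_erase.2 ⟨?_, mem_univ z⟩, hz⟩
    rintro rfl
    exact absurd (hua.symm.trans hz) (by decide)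
  · refine card_le_one.2 fun u hu v hv => by_contra fun huv => ?_
    obtain ⟨⟨huC, hua⟩, huz⟩ : (u ∈ C ∧ u a = 2) ∧ u z = 1 := by simpa [bipartiteBelow] using hu
    obtain ⟨⟨hvC, hva⟩, hvz⟩ : (v ∈ C ∧ v a = 2) ∧ v z = 1 := by simpa [bipartiteBelow] using hv
    have hfar := hC.2 u huC v hvC huv
    have hnear := hammingDist_le_four_of_agree (hC.1 u huC) (hC.1 v hvC) (a := a) (b := z)
      (by rintro rfl; exact absurd (hua.symm.trans huz) (by decide)) (hua.trans hva.symm)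
      (huz.trans hvz.symm) (by rw [hua]; decide) (by rw [huz]; decide)
    omega

theorem IsCCCode.card_le_w211 {C : Finset (X → ZMod 4)} (hC : IsCCCode 4 5 w211 C) :
    #C ≤ Fintype.card X * ((Fintype.card X - 1) / 2) := by
  have hsum : ∑ a : X, #{u ∈ C | u a = 2} = #C := by
    rw [card_eq_sum_ones C]
    refine (sum_card_bipartiteAbove_eq_sum_card_bipartiteBelow
      (fun a (u : X → ZMod 4) => u a = 2)).trans ?_
    exact sum_congr rfl fun u hu => hC.1 u hu 2 (by decide)
  calc #C = ∑ a : X, #{u ∈ C | u a = 2} := hsum.symm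
    _ ≤ ∑ _a : X, (Fintype.card X - 1) / 2 := sum_le_sum fun a _ =>
        (Nat.le_div_iff_mul_le two_pos).2 (hC.card_filter_eq_two_mul_two_le a)
    _ = Fintype.card X * ((Fintype.card X - 1) / 2) := by simp

end Composition

section RoomWord

variable {X : Type*} [DecidableEq X]

def roomWord (r c : X) (p : Sym2 X) : X → ZMod 4 := fun z =>
  if z = r then 2 else if z = c then 3 else if z ∈ p then 1 else 0

theorem roomWord_ne_zero_iff {r c z : X} {p : Sym2 X} :
    roomWord r c p z ≠ 0 ↔ z = r ∨ z = c ∨ z ∈ p := by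
  unfold roomWord
  split_ifs <;> simp_all <;> decide

theorem roomWord_agree_cases {r₁ c₁ r₂ c₂ z : X} {p₁ p₂ : Sym2 X}
    (h : roomWord r₁ c₁ p₁ z = roomWord r₂ c₂ p₂ z) (h0 : roomWord r₁ c₁ p₁ z ≠ 0) :
    (z = r₁ ∧ z = r₂) ∨ (z = c₁ ∧ z = c₂) ∨ (z ∈ p₁ ∧ z ∈ p₂) := by
  unfold roomWord at h h0
  split_ifs at h h0 <;> first | exact absurd h (by decide) | simp_all

theorem eq_and_eq_of_roomWord_eq {r₁ c₁ r₂ c₂ : X} {p₁ p₂ : Sym2 X} (hrc₁ : r₁ ≠ c₁)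
    (h : roomWord r₁ c₁ p₁ = roomWord r₂ c₂ p₂) : r₁ = r₂ ∧ c₁ = c₂ := by
  have hr := congrFun h r₁
  have hc := congrFun h c₁
  unfold roomWord at hr hc
  split_ifs at hr hc <;>
    first | exact absurd hr (by decide) | exact absurd hc (by decide) | simp_all

theorem hasComposition_roomWord [Fintype X] {r c : X} {p : Sym2 X} (hrc : r ≠ c) (hr : r ∉ p)
    (hc : c ∉ p) (hp : ¬p.IsDiag) : HasComposition w211 (roomWord r c p) := by
  have hval : ∀ z, (roomWord r c p z = 1 ↔ z ∈ p) ∧ (roomWord r c p z = 2 ↔ z = r) ∧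
      (roomWord r c p z = 3 ↔ z = c) := by
    intro z
    unfold roomWord
    split_ifs <;> simp_all <;> decide
  intro j hj
  obtain rfl | rfl | rfl : j = 1 ∨ j = 2 ∨ j = 3 := by revert j; decide
  · calc #{z | roomWord r c p z = 1} = #p.toFinset := congrArg card (ext fun z => by simp [hval])
      _ = 2 := Sym2.card_toFinset_of_not_isDiag p hp
  · calc #{z | roomWord r c p z = 2} = #{r} := congrArg card (ext fun z => by simp [hval])
      _ = 1 := card_singleton r
  · calc #{z | roomWord r c p z = 3} = #{c} := congrArg card (ext fun z => by simp [hval])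
      _ = 1 := card_singleton c

end RoomWord

def crossPairs (t : ℕ) : Finset (Fin (2 * t) × Fin (2 * t)) :=
  univ.filter fun xy => (xy.1 : ℕ) / 2 ≠ (xy.2 : ℕ) / 2

theorem card_filter_hole_ne {t : ℕ} (x : Fin (2 * t)) :
    #{y : Fin (2 * t) | (x : ℕ) / 2 ≠ (y : ℕ) / 2} = 2 * (t - 1) := by
  have hmates : ({y : Fin (2 * t) | (x : ℕ) / 2 = (y : ℕ) / 2} : Finset _) =
      {⟨2 * ((x : ℕ) / 2), by omega⟩, ⟨2 * ((x : ℕ) / 2) + 1, by omega⟩} := by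
    ext y
    simp only [mem_filter, mem_univ, true_and, mem_insert, mem_singleton, Fin.ext_iff]
    omega
  have hsplit := card_filter_add_card_filter_not (s := univ)
    (p := fun y : Fin (2 * t) => (x : ℕ) / 2 = (y : ℕ) / 2)
  rw [hmates, card_pair (by simp [Fin.ext_iff]), card_univ, Fintype.card_fin] at hsplit
  simp only [ne_eq]
  omega

theorem card_crossPairs (t : ℕ) : #(crossPairs t) = 2 * t * (2 * (t - 1)) := by
  rw [crossPairs, ← univ_product_univ, card_filter, sum_product]
  simp_rw [← card_filter, card_filter_hole_ne]
  simp

namespace RoomFrame2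

variable {t : ℕ} (F : RoomFrame2 t)

def transpose : RoomFrame2 t where
  cell r c := F.cell c r
  hole_empty r c h := F.hole_empty c r h.symm
  cross_pairs r c := F.cross_pairs c r
  row_once := F.col_once
  col_once := F.row_once
  pair_once x y h := by
    obtain ⟨rc, hrc, huniq⟩ := F.pair_once x y h
    exact ⟨rc.swap, hrc, fun rc' h' => Prod.swap_eq_iff_eq_swap.1 (huniq rc'.swap h')⟩

def blocks : Finset (Fin (2 * t) × Fin (2 * t) × Sym2 (Fin (2 * t))) :=
  univ.filter fun b => F.cell b.1 b.2.1 = some b.2.2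

def incidences : Finset ((Fin (2 * t) × Fin (2 * t) × Sym2 (Fin (2 * t))) × Fin (2 * t)) :=
  (F.blocks ×ˢ univ).filter fun i => i.2 ∈ i.1.2.2

variable {F}

theorem mem_blocks {b : Fin (2 * t) × Fin (2 * t) × Sym2 (Fin (2 * t))} :
    b ∈ F.blocks ↔ F.cell b.1 b.2.1 = some b.2.2 := by
  simp [blocks]

theorem not_isDiag {r c : Fin (2 * t)} {p : Sym2 (Fin (2 * t))} (h : F.cell r c = some p) :
    ¬p.IsDiag := by
  induction p using Sym2.ind with
  | _ a b => exact fun hab => F.cross_pairs r c _ h a b rfl (by rw [Sym2.mk_isDiag_iff.1 hab])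

variable (F)

theorem card_incidences : #F.incidences = 2 * #F.blocks := by
  rw [incidences, card_filter, sum_product, card_eq_sum_ones, mul_sum]
  refine sum_congr rfl fun b hb => ?_
  rw [← card_filter, mul_one]
  refine (congrArg card ?_).trans
    (Sym2.card_toFinset_of_not_isDiag _ (not_isDiag (mem_blocks.1 hb)))
  ext x
  simp [Sym2.mem_toFinset]

theorem card_incidences_eq_card_crossPairs : #F.incidences = #(crossPairs t) := by
  have h := card_mul_eq_card_mul (s := F.incidences) (t := crossPairs t) (m := 1) (n := 1)
    (fun i xy => xy.1 = i.2 ∧ i.1.2.2 = s(xy.1, xy.2)) ?_ ?_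
  · simpa using h
  · rintro ⟨⟨r, c, p⟩, x⟩ hi
    obtain ⟨hb, hx⟩ : F.cell r c = some p ∧ x ∈ p := by simpa [incidences, mem_blocks] using hi
    obtain ⟨y, rfl⟩ := Sym2.mem_iff_exists.1 hx
    refine card_eq_one.2 ⟨(x, y), ?_⟩
    ext ⟨x', y'⟩
    simp only [bipartiteAbove, crossPairs, mem_filter, mem_univ, true_and, mem_singleton,
      Prod.mk.injEq]
    constructor
    · rintro ⟨-, rfl, h⟩
      exact ⟨rfl, (Sym2.congr_right.1 h).symm⟩
    · rintro ⟨rfl, rfl⟩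
      exact ⟨F.cross_pairs r c _ hb _ _ rfl, rfl, rfl⟩
  · rintro ⟨x, y⟩ hxy
    obtain ⟨⟨r, c⟩, hrc, huniq⟩ := F.pair_once x y (mem_filter.1 hxy).2
    refine card_eq_one.2 ⟨((r, c, s(x, y)), x), ?_⟩
    ext ⟨⟨r', c', p'⟩, x'⟩
    simp only [bipartiteBelow, incidences, mem_filter, mem_product, mem_blocks, mem_univ,
      and_true, mem_singleton, Prod.mk.injEq]
    constructor
    · rintro ⟨⟨h, -⟩, rfl, rfl⟩
      obtain ⟨rfl, rfl⟩ := Prod.mk.inj (huniq (r', c') h)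
      exact ⟨⟨rfl, rfl, rfl⟩, rfl⟩
    · rintro ⟨⟨rfl, rfl, rfl⟩, rfl⟩
      exact ⟨⟨hrc, Sym2.mem_mk_left _ _⟩, rfl, rfl⟩

theorem card_filter_incidences_ne_hole :
    #{i ∈ F.incidences | (i.1.1 : ℕ) / 2 ≠ (i.2 : ℕ) / 2} = #(crossPairs t) := by
  refine card_nbij (fun i => (i.1.1, i.2)) ?_ ?_ ?_
  · rintro ⟨⟨r, c, p⟩, x⟩ hi
    simp only [coe_filter, Set.mem_ofPred_eq] at hi
    simpa [crossPairs] using hi.2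
  · rintro ⟨⟨r, c, p⟩, x⟩ hi ⟨⟨r', c', p'⟩, x'⟩ hi' h
    obtain ⟨rfl, rfl⟩ := Prod.mk.inj h
    simp only [coe_filter, incidences, mem_filter, mem_product, mem_blocks, mem_univ, and_true,
      Set.mem_ofPred_eq] at hi hi'
    obtain rfl : c = c' := (F.row_once r x hi.2).unique ⟨p, hi.1⟩ ⟨p', hi'.1⟩
    rw [Option.some.inj (hi.1.1.symm.trans hi'.1.1)]
  · rintro ⟨r, x⟩ hrx
    obtain ⟨c, ⟨p, hp, hx⟩, -⟩ := F.row_once r x (mem_filter.1 hrx).2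
    refine ⟨((r, c, p), x), ?_, rfl⟩
    simpa [incidences, mem_blocks, hp, hx] using (mem_filter.1 hrx).2

variable {F}

/-- The frame axioms only say that the symbols outside the hole of `r` occur once in row `r`;
by `card_filter_incidences_ne_hole` these occurrences already exhaust all incidences. -/
theorem row_hole_ne_of_mem {r c x : Fin (2 * t)} {p : Sym2 (Fin (2 * t))} (h : F.cell r c = some p)
    (hx : x ∈ p) : (r : ℕ) / 2 ≠ (x : ℕ) / 2 := by
  have hall : {i ∈ F.incidences | (i.1.1 : ℕ) / 2 ≠ (i.2 : ℕ) / 2} = F.incidences :=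
    eq_of_subset_of_card_le (filter_subset _ _) (by
      rw [card_filter_incidences_ne_hole, card_incidences_eq_card_crossPairs])
  have hi : ((r, c, p), x) ∈ F.incidences := by simp [incidences, mem_blocks, h, hx]
  rw [← hall] at hi
  exact (mem_filter.1 hi).2

theorem row_not_mem {r c : Fin (2 * t)} {p : Sym2 (Fin (2 * t))} (h : F.cell r c = some p) :
    r ∉ p :=
  fun hr => F.row_hole_ne_of_mem h hr rfl

theorem col_not_mem {r c : Fin (2 * t)} {p : Sym2 (Fin (2 * t))} (h : F.cell r c = some p) :
    c ∉ p :=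
  fun hc => F.transpose.row_hole_ne_of_mem (c := r) h hc rfl

theorem row_ne_col {r c : Fin (2 * t)} {p : Sym2 (Fin (2 * t))} (h : F.cell r c = some p) :
    r ≠ c := by
  rintro rfl
  simp [F.hole_empty r r rfl] at h

theorem hasComposition_roomWord {r c : Fin (2 * t)} {p : Sym2 (Fin (2 * t))}
    (h : F.cell r c = some p) : HasComposition w211 (roomWord r c p) :=
  _root_.hasComposition_roomWord (F.row_ne_col h) (F.row_not_mem h) (F.col_not_mem h)
    (F.not_isDiag h)

variable (F)

theorem card_blocks : #F.blocks = 2 * t * (t - 1) := by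
  have h := F.card_incidences.symm.trans F.card_incidences_eq_card_crossPairs
  rw [card_crossPairs] at h
  linarith

variable {F}
variable {r₁ c₁ r₂ c₂ : Fin (2 * t)} {p₁ p₂ : Sym2 (Fin (2 * t))}

theorem eq_of_row_eq_of_mem {x : Fin (2 * t)} (h₁ : F.cell r₁ c₁ = some p₁)
    (h₂ : F.cell r₂ c₂ = some p₂) (hr : r₁ = r₂) (hx₁ : x ∈ p₁) (hx₂ : x ∈ p₂) :
    (r₁, c₁) = (r₂, c₂) := by
  subst hr
  exact Prod.ext rfl
    ((F.row_once r₁ x (F.row_hole_ne_of_mem h₁ hx₁)).unique ⟨p₁, h₁, hx₁⟩ ⟨p₂, h₂, hx₂⟩)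

theorem eq_of_col_eq_of_mem {x : Fin (2 * t)} (h₁ : F.cell r₁ c₁ = some p₁)
    (h₂ : F.cell r₂ c₂ = some p₂) (hc : c₁ = c₂) (hx₁ : x ∈ p₁) (hx₂ : x ∈ p₂) :
    (r₁, c₁) = (r₂, c₂) :=
  congrArg Prod.swap (F.transpose.eq_of_row_eq_of_mem (r₁ := c₁) (r₂ := c₂) h₁ h₂ hc hx₁ hx₂)

theorem eq_of_cell_eq {p : Sym2 (Fin (2 * t))} (h₁ : F.cell r₁ c₁ = some p)
    (h₂ : F.cell r₂ c₂ = some p) : (r₁, c₁) = (r₂, c₂) := by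
  induction p using Sym2.ind with
  | _ a b => exact (F.pair_once a b (F.cross_pairs r₁ c₁ _ h₁ a b rfl)).unique h₁ h₂

theorem card_agree_le_one (h₁ : F.cell r₁ c₁ = some p₁) (h₂ : F.cell r₂ c₂ = some p₂)
    (hne : (r₁, c₁) ≠ (r₂, c₂)) :
    #{z | roomWord r₁ c₁ p₁ z ≠ 0 ∧ roomWord r₁ c₁ p₁ z = roomWord r₂ c₂ p₂ z} ≤ 1 := by
  refine card_le_one.2 fun z hz w hw => by_contra fun hzw => hne ?_
  simp only [mem_filter, mem_univ, true_and] at hz hw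
  rcases roomWord_agree_cases hz.2 hz.1 with hzr | hzc | ⟨hz₁, hz₂⟩ <;>
    rcases roomWord_agree_cases hw.2 hw.1 with hwr | hwc | ⟨hw₁, hw₂⟩
  · exact absurd (hzr.1.trans hwr.1.symm) hzw
  · exact Prod.ext (hzr.1.symm.trans hzr.2) (hwc.1.symm.trans hwc.2)
  · exact eq_of_row_eq_of_mem h₁ h₂ (hzr.1.symm.trans hzr.2) hw₁ hw₂
  · exact Prod.ext (hwr.1.symm.trans hwr.2) (hzc.1.symm.trans hzc.2)
  · exact absurd (hzc.1.trans hwc.1.symm) hzw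
  · exact eq_of_col_eq_of_mem h₁ h₂ (hzc.1.symm.trans hzc.2) hw₁ hw₂
  · exact eq_of_row_eq_of_mem h₁ h₂ (hwr.1.symm.trans hwr.2) hz₁ hz₂
  · exact eq_of_col_eq_of_mem h₁ h₂ (hwc.1.symm.trans hwc.2) hz₁ hz₂
  · exact eq_of_cell_eq h₁ (Sym2.eq_of_ne_mem hzw hz₂ hw₂ hz₁ hw₁ ▸ h₂)

theorem card_support_inter_le_two (hss : F.SuperSimple) (h₁ : F.cell r₁ c₁ = some p₁)
    (h₂ : F.cell r₂ c₂ = some p₂) (hne : (r₁, c₁) ≠ (r₂, c₂)) :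
    #{z | roomWord r₁ c₁ p₁ z ≠ 0 ∧ roomWord r₂ c₂ p₂ z ≠ 0} ≤ 2 := by
  have h := hss r₁ c₁ p₁ r₂ c₂ p₂ h₁ h₂ hne
  rw [← Set.ncard_coe_finset]
  convert h using 2
  ext z
  simp only [coe_filter, mem_univ, true_and, Set.mem_ofPred_eq, roomWord_ne_zero_iff,
    Set.mem_inter_iff, Set.mem_union, Set.mem_insert_iff, Set.mem_singleton_iff]
  tauto

theorem five_le_hammingDist (hss : F.SuperSimple) (h₁ : F.cell r₁ c₁ = some p₁)
    (h₂ : F.cell r₂ c₂ = some p₂) (hne : (r₁, c₁) ≠ (r₂, c₂)) :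
    5 ≤ hammingDist (roomWord r₁ c₁ p₁) (roomWord r₂ c₂ p₂) := by
  have key := hammingDist_add_card_agree_add_card_inter (roomWord r₁ c₁ p₁) (roomWord r₂ c₂ p₂)
  rw [(hasComposition_roomWord h₁).hammingNorm_w211,
    (hasComposition_roomWord h₂).hammingNorm_w211] at key
  have hagree := card_agree_le_one h₁ h₂ hne
  have hinter := card_support_inter_le_two hss h₁ h₂ hne
  omega

variable (F)

def code : Finset (Fin (2 * t) → ZMod 4) :=
  F.blocks.image fun b => roomWord b.1 b.2.1 b.2.2

theorem card_code : #F.code = 2 * t * (t - 1) := by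
  rw [code, card_image_of_injOn, card_blocks]
  rintro ⟨r₁, c₁, p₁⟩ hb₁ ⟨r₂, c₂, p₂⟩ hb₂ h
  simp only [mem_coe, mem_blocks] at hb₁ hb₂
  obtain ⟨rfl, rfl⟩ := eq_and_eq_of_roomWord_eq (row_ne_col hb₁) h
  rw [Option.some.inj (hb₁.symm.trans hb₂)]

theorem isCCCode_code (hss : F.SuperSimple) : IsCCCode 4 5 w211 F.code := by
  simp only [IsCCCode, code, forall_mem_image]
  refine ⟨fun b hb => hasComposition_roomWord (mem_blocks.1 hb), ?_⟩
  rintro ⟨r₁, c₁, p₁⟩ hb₁ ⟨r₂, c₂, p₂⟩ hb₂ hne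
  simp only [mem_blocks] at hb₁ hb₂
  refine five_le_hammingDist hss hb₁ hb₂ fun h => hne ?_
  obtain ⟨rfl, rfl⟩ := Prod.mk.inj h
  rw [Option.some.inj (hb₁.symm.trans hb₂)]

end RoomFrame2

/-- If a super-simple Room frame of type `2^t` exists, then there is an optimal
`(2t,5,[2,1,1])₄`-code of size `2t(t−1)`, meeting the bound `2t·⌊(2t−1)/2⌋`. -/
theorem maxCCC_of_superSimpleRoomFrame (t : ℕ) (F : RoomFrame2 t)
    (hss : F.SuperSimple) :
    maxCCC 4 (2 * t) 5 w211 = 2 * t * (t - 1) ∧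
    2 * t * (t - 1) = 2 * t * ((2 * t - 1) / 2) := by
  have hfloor : (2 * t - 1) / 2 = t - 1 := by omega
  refine ⟨IsGreatest.csSup_eq ⟨⟨F.code, F.isCCCode_code hss, F.card_code⟩, ?_⟩, by rw [hfloor]⟩
  rintro _ ⟨C, hC, rfl⟩
  simpa [hfloor] using hC.card_le_w211
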